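/- Let R be a curvature-like tensor on ℝ^N whose bivector square vanishes, R^{(2)}_{abcd} = 0, and whose Ricci contraction vanishes, Ric(R) = 0. Suppose there is a null frame in which all boost-weight +2 components vanish: R_{0i0j} = R(ℓ,m_i,ℓ,m_j) = 0 for all spatial i, j. Then all boost-weight +1 components vanish as well: R_{0i01} = 0 and R_{0ijk} = 0 for all spatial i, j, k; in particular the boost order of R along ℓ is at most 0. -/

import Mathlib

open Matrix

/-! Null-frame formalism: we work with the components of tensors with respect to a
null frame `e_0 = ℓ, e_1 = n, e_2 = m_2, …, e_{N−1} = m_{N−1}` for the Minkowski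
form `η` on `ℝ^N` (so `η(ℓ,n) = 1`, `η(m_i,m_j) = δ_{ij}`, all other frame products
vanish).  `ηnf N` is the matrix of frame components `η_{AB}`, and `ηup N = (ηnf N)⁻¹`
is the matrix of the inverse-metric components `η^{AB}` used to raise indices.
Spatial indices are those `i : Fin N` with `2 ≤ i`. -/

/-- Frame components `η_{AB}` of the Minkowski form in a null frame. -/
def ηnf (N : ℕ) : Matrix (Fin N) (Fin N) ℝ :=
  Matrix.of fun A B =>
    if ((A : ℕ) = 0 ∧ (B : ℕ) = 1) ∨ ((A : ℕ) = 1 ∧ (B : ℕ) = 0) then 1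
    else if A = B ∧ 2 ≤ (A : ℕ) then 1 else 0

/-- Components `η^{AB}` of the inverse metric in a null frame. -/
noncomputable def ηup (N : ℕ) : Matrix (Fin N) (Fin N) ℝ := (ηnf N)⁻¹

/-- The boost weight of a null-frame index: `+1` for the index `0` (the `ℓ` slot),
`−1` for the index `1` (the `n` slot), `0` for spatial indices. -/
def bw {N : ℕ} (A : Fin N) : ℤ :=
  if (A : ℕ) = 0 then 1 else if (A : ℕ) = 1 then -1 else 0

/-- A curvature-like tensor: a 4-linear form (given here by its null-frame components)
with `R_{abcd} = −R_{bacd} = R_{cdab}`. -/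
def CurvLike {N : ℕ} (R : Fin N → Fin N → Fin N → Fin N → ℝ) : Prop :=
  (∀ a b c d, R a b c d = -R b a c d) ∧ (∀ a b c d, R a b c d = R c d a b)

/-- The bivector square of a curvature-like tensor:
`R⁽²⁾_{abcd} = (1/2) R_{abef} η^{eg} η^{fh} R_{ghcd}`. -/
noncomputable def bivSq (N : ℕ) (R : Fin N → Fin N → Fin N → Fin N → ℝ) :
    Fin N → Fin N → Fin N → Fin N → ℝ :=
  fun a b c d =>
    (1 / 2 : ℝ) * ∑ e, ∑ f, ∑ g, ∑ h,
      R a b e f * ηup N e g * ηup N f h * R g h c d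

/-- The Ricci contraction `Ric_{ab} = η^{cd} R_{acbd}` of a curvature-like tensor. -/
noncomputable def ricci (N : ℕ) (R : Fin N → Fin N → Fin N → Fin N → ℝ) :
    Fin N → Fin N → ℝ :=
  fun a b => ∑ c, ∑ d, ηup N c d * R a c b d

/-! Contracting with `η` in a null frame only swaps the indices `0` and `1`. Put
`A_i = (R_{0ikl})_{kl}` and `v_i = R_{0i01}` for spatial `i, k, l`. Once `R_{0i0j} = 0`,
the equation `R⁽²⁾_{0i0j} = 0` says that the Gram matrix of the antisymmetric matrices `A_i`
is `⟨A_i, A_j⟩ = 2 v_i v_j`, and `Ric_{0i} = 0` says that `∑_k (A_k)_{ik} = v_i`.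
A Gram matrix of rank one forces `|v|² A_i = v_i W` with `W = ∑_j v_j A_j`, again
antisymmetric, so `|v|⁴ = ∑_{i,k} v_i v_k W_{ik} = 0`. Hence `v = 0`, and then `‖A_i‖² = 0`. -/

open scoped RealInnerProductSpace

theorem sum_sq_smul_eq_smul_sum {E ι : Type*} [NormedAddCommGroup E] [InnerProductSpace ℝ E]
    [Fintype ι] (x : ι → E) (v : ι → ℝ) (a : ℝ)
    (hx : ∀ i j, ⟪x i, x j⟫ = a * (v i * v j)) (i : ι) :
    (∑ j, v j ^ 2) • x i = v i • ∑ j, v j • x j := by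
  set c := ∑ j, v j ^ 2
  set w := ∑ j, v j • x j
  have hxw : ∀ i, ⟪x i, w⟫ = a * v i * c := fun i => by
    simp only [w, c, inner_sum, real_inner_smul_right, hx, Finset.mul_sum]
    exact Finset.sum_congr rfl fun j _ => by ring
  have hww : ⟪w, w⟫ = a * c ^ 2 := by
    simp only [w, sum_inner, real_inner_smul_left, hxw, c, sq, Finset.mul_sum, Finset.sum_mul]
    exact Finset.sum_congr rfl fun j _ => Finset.sum_congr rfl fun k _ => by ring
  rw [← sub_eq_zero, ← inner_self_eq_zero (𝕜 := ℝ)]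
  simp only [inner_sub_left, inner_sub_right, real_inner_smul_left, real_inner_smul_right,
    hx, hxw, real_inner_comm (x i) w, hww]
  ring

theorem sum_sum_mul_mul_eq_zero_of_antisymm {R ι : Type*} [CommRing R] [IsAddTorsionFree R]
    [Fintype ι] (W : ι → ι → R) (hW : ∀ i k, W i k = -W k i) (v : ι → R) :
    ∑ i, ∑ k, v i * v k * W i k = 0 := by
  rw [← self_eq_neg]
  conv_lhs => rw [Finset.sum_comm]
  simp only [← Finset.sum_neg_distrib]
  exact Finset.sum_congr rfl fun i _ => Finset.sum_congr rfl fun k _ => by rw [hW]; ring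

theorem eq_zero_of_gram_eq_of_trace_eq {ι : Type*} [Fintype ι]
    (A : ι → ι → ι → ℝ) (v : ι → ℝ) (a : ℝ) (hA : ∀ i k l, A i k l = -A i l k)
    (hgram : ∀ i j, ∑ k, ∑ l, A i k l * A j k l = a * (v i * v j))
    (htrace : ∀ i, ∑ k, A k i k = v i) :
    v = 0 ∧ A = 0 := by
  let x : ι → EuclideanSpace ℝ (ι × ι) := fun i => WithLp.toLp 2 fun p => A i p.1 p.2
  have hx : ∀ i j, ⟪x i, x j⟫ = a * (v i * v j) := fun i j => by
    simp only [x, EuclideanSpace.inner_toLp_toLp, dotProduct, Fintype.sum_prod_type, star_trivial,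
      ← hgram, mul_comm]
  set c := ∑ j, v j ^ 2
  set W : ι → ι → ℝ := fun k l => ∑ j, v j * A j k l
  have hcA : ∀ i k l, c * A i k l = v i * W k l := fun i k l => by
    simpa [x, W, Finset.sum_apply, Finset.mul_sum] using
      congrArg (fun y : EuclideanSpace ℝ (ι × ι) => y (k, l)) (sum_sq_smul_eq_smul_sum x v a hx i)
  have hc : c * c = 0 := calc
    c * c = ∑ i, v i * (c * ∑ k, A k i k) := by
      simp only [htrace]
      exact (Finset.sum_mul _ _ _).trans (Finset.sum_congr rfl fun i _ => by ring)
    _ = ∑ i, ∑ k, v i * v k * W i k := by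
      simp only [Finset.mul_sum, hcA, mul_assoc]
    _ = 0 := sum_sum_mul_mul_eq_zero_of_antisymm W
      (fun i k => by simp only [W, hA _ i k, mul_neg, Finset.sum_neg_distrib]) v
  have hv : v = 0 := funext fun i =>
    pow_eq_zero_iff two_ne_zero |>.1 <| (Finset.sum_eq_zero_iff_of_nonneg fun j _ => sq_nonneg (v j)).1
      (mul_self_eq_zero.1 hc) i (Finset.mem_univ i)
  refine ⟨hv, ?_⟩
  ext i k l
  have hxi : x i = 0 := inner_self_eq_zero.1 ((hx i i).trans (by simp [hv]))
  simpa [x] using congrArg (fun y : EuclideanSpace ℝ (ι × ι) => y (k, l)) hxi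

theorem Fin.sum_univ_succ_succ {β : Type*} [AddCommMonoid β] {M : ℕ} (f : Fin (M + 2) → β) :
    ∑ x, f x = f 0 + f 1 + ∑ j : Fin M, f j.succ.succ := by
  simp only [Fin.sum_univ_succ, Fin.succ_zero_eq_one, add_assoc]

@[simp]
theorem Fin.swap_zero_one_succ_succ {M : ℕ} (j : Fin M) :
    Equiv.swap 0 1 j.succ.succ = j.succ.succ :=
  Equiv.swap_apply_of_ne_of_ne (Fin.succ_ne_zero _) (by simp [Fin.ext_iff])

theorem Fin.exists_succ_succ_eq {M : ℕ} (i : Fin (M + 2)) (hi : 2 ≤ (i : ℕ)) :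
    ∃ j : Fin M, j.succ.succ = i :=
  ⟨⟨i - 2, by omega⟩, Fin.ext (by simp; omega)⟩

theorem ηnf_apply {M : ℕ} (A B : Fin (M + 2)) :
    ηnf (M + 2) A B = if Equiv.swap 0 1 A = B then 1 else 0 := by
  obtain ⟨a, ha⟩ := A
  obtain ⟨b, hb⟩ := B
  simp only [ηnf, Matrix.of_apply, Equiv.swap_apply_def, Fin.ext_iff, apply_ite Fin.val,
    Fin.val_zero, Fin.val_one]
  split_ifs <;> first | rfl | omega

theorem ηnf_mul_self (M : ℕ) : ηnf (M + 2) * ηnf (M + 2) = 1 := by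
  ext A B
  simp only [Matrix.mul_apply, ηnf_apply, boole_mul, Finset.sum_ite_eq, Finset.mem_univ, if_true,
    Equiv.swap_apply_self, Matrix.one_apply]

theorem ηup_eq (M : ℕ) : ηup (M + 2) = ηnf (M + 2) :=
  Matrix.inv_eq_right_inv (ηnf_mul_self M)

theorem sum_ηup_mul {M : ℕ} (e : Fin (M + 2)) (f : Fin (M + 2) → ℝ) :
    ∑ g, ηup (M + 2) e g * f g = f (Equiv.swap 0 1 e) := by
  simp [ηup_eq, ηnf_apply]

theorem bivSq_eq {M : ℕ} (R : Fin (M + 2) → Fin (M + 2) → Fin (M + 2) → Fin (M + 2) → ℝ)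
    (a b c d : Fin (M + 2)) :
    bivSq (M + 2) R a b c d =
      (1 / 2) * ∑ e, ∑ f, R a b e f * R (Equiv.swap 0 1 e) (Equiv.swap 0 1 f) c d := by
  simp only [bivSq, mul_assoc, ← Finset.mul_sum, sum_ηup_mul]

theorem ricci_eq {M : ℕ} (R : Fin (M + 2) → Fin (M + 2) → Fin (M + 2) → Fin (M + 2) → ℝ)
    (a b : Fin (M + 2)) :
    ricci (M + 2) R a b = ∑ c, R a c b (Equiv.swap 0 1 c) := by
  simp only [ricci, sum_ηup_mul]

namespace CurvLike

variable {N : ℕ} {R : Fin N → Fin N → Fin N → Fin N → ℝ}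

theorem antisymm_left (hR : CurvLike R) (a b c d : Fin N) : R a b c d = -R b a c d :=
  hR.1 a b c d

theorem pair_symm (hR : CurvLike R) (a b c d : Fin N) : R a b c d = R c d a b :=
  hR.2 a b c d

theorem antisymm_right (hR : CurvLike R) (a b c d : Fin N) : R a b c d = -R a b d c := by
  rw [hR.pair_symm, hR.antisymm_left, hR.pair_symm]

theorem apply_self_left (hR : CurvLike R) (a c d : Fin N) : R a a c d = 0 :=
  self_eq_neg.1 (hR.antisymm_left a a c d)

theorem apply_self_right (hR : CurvLike R) (a b c : Fin N) : R a b c c = 0 :=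
  self_eq_neg.1 (hR.antisymm_right a b c c)

end CurvLike

section NullFrame

variable {M : ℕ} {R : Fin (M + 2) → Fin (M + 2) → Fin (M + 2) → Fin (M + 2) → ℝ}

theorem CurvLike.sum_spatial_eq_of_ricci_eq_zero (hR : CurvLike R) (a : Fin (M + 2))
    (hric : ricci (M + 2) R 0 a = 0) :
    ∑ k : Fin M, R 0 k.succ.succ a k.succ.succ = R 0 a 0 1 := by
  rw [ricci_eq, Fin.sum_univ_succ_succ] at hric
  simp only [Equiv.swap_apply_left, Equiv.swap_apply_right, Fin.swap_zero_one_succ_succ,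
    hR.apply_self_left, zero_add] at hric
  rw [hR.pair_symm, hR.antisymm_left] at hric
  linarith

theorem CurvLike.sum_mul_spatial_eq_of_bivSq_eq_zero (hR : CurvLike R)
    (hbw2 : ∀ j k : Fin M, R 0 j.succ.succ 0 k.succ.succ = 0) (i j : Fin M)
    (hsq : bivSq (M + 2) R 0 i.succ.succ 0 j.succ.succ = 0) :
    ∑ k : Fin M, ∑ l : Fin M,
        R 0 i.succ.succ k.succ.succ l.succ.succ * R 0 j.succ.succ k.succ.succ l.succ.succ =
      2 * (R 0 i.succ.succ 0 1 * R 0 j.succ.succ 0 1) := by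
  have h10 : R 1 0 0 j.succ.succ = -R 0 j.succ.succ 0 1 := by
    rw [hR.antisymm_left, hR.pair_symm]
  have h01 : R 0 1 0 j.succ.succ = R 0 j.succ.succ 0 1 := hR.pair_symm ..
  have hik0 : ∀ k : Fin M, R 0 i.succ.succ k.succ.succ 0 = 0 := fun k => by
    rw [hR.antisymm_right, hbw2, neg_zero]
  have hk00j : ∀ k : Fin M, R k.succ.succ 0 0 j.succ.succ = 0 := fun k => by
    rw [hR.pair_symm, hR.antisymm_right, hbw2, neg_zero]
  have hkl0j : ∀ k l : Fin M, R k.succ.succ l.succ.succ 0 j.succ.succ =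
      R 0 j.succ.succ k.succ.succ l.succ.succ := fun k l => hR.pair_symm ..
  rw [bivSq_eq] at hsq
  simp only [Fin.sum_univ_succ_succ, Equiv.swap_apply_left, Equiv.swap_apply_right,
    Fin.swap_zero_one_succ_succ, hR.apply_self_right, hbw2, hik0, hk00j, hkl0j, h10, h01,
    hR.antisymm_right _ _ 1 0, zero_mul, mul_zero, Finset.sum_const_zero, zero_add, add_zero] at hsq
  linarith

end NullFrame

/-- **Lemma 8** (`lem:nzr`), key step: let `R` be a curvature-like tensor with vanishing
bivector square `R⁽²⁾ = 0` and vanishing Ricci contraction, and suppose all boost-weight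
`+2` components vanish in some null frame: `R_{0i0j} = 0` for all spatial `i, j`.  Then
all boost-weight `+1` components vanish as well: `R_{0i01} = 0` and `R_{0ijk} = 0`;
in particular the boost order of `R` along `ℓ` is at most `0`. -/
theorem bw_one_components_vanish (N : ℕ) (hN : 2 ≤ N)
    (R : Fin N → Fin N → Fin N → Fin N → ℝ) (hcurv : CurvLike R)
    (hsq : ∀ a b c d, bivSq N R a b c d = 0)
    (hric : ∀ a b, ricci N R a b = 0)
    (hbw2 : ∀ i j : Fin N, 2 ≤ (i : ℕ) → 2 ≤ (j : ℕ) →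
      R ⟨0, by omega⟩ i ⟨0, by omega⟩ j = 0) :
    (∀ i : Fin N, 2 ≤ (i : ℕ) →
      R ⟨0, by omega⟩ i ⟨0, by omega⟩ ⟨1, by omega⟩ = 0) ∧
    (∀ i j k : Fin N, 2 ≤ (i : ℕ) → 2 ≤ (j : ℕ) → 2 ≤ (k : ℕ) →
      R ⟨0, by omega⟩ i j k = 0) := by
  obtain ⟨M, rfl⟩ : ∃ M, N = M + 2 := ⟨N - 2, by omega⟩
  simp only [Fin.zero_eta, Fin.mk_one] at hbw2 ⊢
  obtain ⟨hv, hA⟩ := eq_zero_of_gram_eq_of_trace_eq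
    (fun i k l : Fin M => R 0 i.succ.succ k.succ.succ l.succ.succ)
    (fun i => R 0 i.succ.succ 0 1) 2 (fun i k l => hcurv.antisymm_right ..)
    (fun i j => hcurv.sum_mul_spatial_eq_of_bivSq_eq_zero
      (fun j k => hbw2 _ _ (by simp) (by simp)) i j (hsq ..))
    (fun i => hcurv.sum_spatial_eq_of_ricci_eq_zero _ (hric ..))
  refine ⟨fun i hi => ?_, fun i j k hi hj hk => ?_⟩
  · obtain ⟨i, rfl⟩ := Fin.exists_succ_succ_eq i hi
    exact congrFun hv i
  · obtain ⟨i, rfl⟩ := Fin.exists_succ_succ_eq i hi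
    obtain ⟨j, rfl⟩ := Fin.exists_succ_succ_eq j hj
    obtain ⟨k, rfl⟩ := Fin.exists_succ_succ_eq k hk
    exact congrFun (congrFun (congrFun hA i) j) k
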